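/- The poset of subsets of {1,...,n}, ordered by I ≥ J iff |I| ≤ |J| and i_s ≥ j_s for all s ≤ |I|, is a distributive lattice with meet and join given by the explicit formulas I ∧ J = (min(i_1,j_1),...,min(i_k,j_k), j_{k+1},...,j_ℓ) and I ∨ J = (max(i_1,j_1),...,max(i_k,j_k)) for |I| = k ≤ ℓ = |J|. -/

import Mathlib

/-!
A finite set of naturals is determined by its cardinality and its increasing enumeration
`sortNth`, so everything reduces to the enumerations. The coordinatewise max of two strictly
increasing sequences is strictly increasing, and so is the meet sequence: its min part is
increasing, and it continues with the tail of `J` because `min(i_k, j_k) ≤ j_k < j_{k+1}`.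
Hence the enumerations of `I ∨ J` and `I ∧ J` are exactly the given formulas, and the lattice
axioms and both distributive laws become coordinatewise facts about `min` and `max` on `ℕ`.
-/

/-- The s-th smallest element (0-indexed) of a finite set of naturals. -/
def sortNth (I : Finset ℕ) (s : ℕ) : ℕ := (I.sort (· ≤ ·))[s]!

/-- The Gonciulea–Lakshmibai order: I ≥ J iff |I| ≤ |J| and the s-th smallest
element of I is ≥ the s-th smallest element of J for all s < |I|. -/
def glGe (I J : Finset ℕ) : Prop :=
  I.card ≤ J.card ∧ ∀ s < I.card, sortNth J s ≤ sortNth I s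

/-- The join I ∨ J = {max(i_1,j_1),…,max(i_k,j_k)} for |I| = k ≤ |J|. -/
def glJoinAux (I J : Finset ℕ) : Finset ℕ :=
  (Finset.range I.card).image (fun s => max (sortNth I s) (sortNth J s))

/-- The meet I ∧ J = {min(i_1,j_1),…,min(i_k,j_k), j_{k+1},…,j_ℓ}
for |I| = k ≤ ℓ = |J|. -/
def glMeetAux (I J : Finset ℕ) : Finset ℕ :=
  (Finset.range J.card).image
    (fun s => if s < I.card then min (sortNth I s) (sortNth J s) else sortNth J s)

/-- Join, defined symmetrically. -/
def glJoin (I J : Finset ℕ) : Finset ℕ :=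
  if I.card ≤ J.card then glJoinAux I J else glJoinAux J I

/-- Meet, defined symmetrically. -/
def glMeet (I J : Finset ℕ) : Finset ℕ :=
  if I.card ≤ J.card then glMeetAux I J else glMeetAux J I

lemma sortNth_eq_getElem {I : Finset ℕ} {s : ℕ} (hs : s < I.card) :
    sortNth I s = (I.sort (· ≤ ·))[s]'(by simpa using hs) :=
  getElem!_pos _ _ _

lemma sortNth_strictMonoOn (I : Finset ℕ) : StrictMonoOn (sortNth I) (Set.Iio I.card) := by
  intro s hs t ht hst
  rw [sortNth_eq_getElem hs, sortNth_eq_getElem ht]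
  exact I.sortedLT_sort.getElem_lt_getElem_of_lt hst

lemma sort_image_range {α : Type*} [LinearOrder α] {m : ℕ} {f : ℕ → α}
    (hf : StrictMonoOn f (Set.Iio m)) :
    ((Finset.range m).image f).sort (· ≤ ·) = (List.range m).map f := by
  have hsorted : ((List.range m).map f).SortedLT :=
    List.sortedLT_of_getElem_lt_getElem_of_lt fun i j hi hj hij => by
      simp only [List.length_map, List.length_range] at hi hj
      simpa using hf (Set.mem_Iio.2 (hij.trans hj)) (Set.mem_Iio.2 hj) hij
  have himage : (Finset.range m).image f = ((List.range m).map f).toFinset := by ext; simp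
  rw [himage]
  exact (List.toFinset_sort _ hsorted.nodup).2 hsorted.sortedLE.pairwise

lemma card_image_range {α : Type*} [LinearOrder α] {m : ℕ} {f : ℕ → α}
    (hf : StrictMonoOn f (Set.Iio m)) : ((Finset.range m).image f).card = m := by
  rw [Finset.card_image_of_injOn (by simpa using hf.injOn), Finset.card_range]

lemma sortNth_image_range {m : ℕ} {f : ℕ → ℕ} (hf : StrictMonoOn f (Set.Iio m)) {s : ℕ}
    (hs : s < m) : sortNth ((Finset.range m).image f) s = f s := by
  rw [sortNth, sort_image_range hf, getElem!_pos _ _ (by simpa using hs)]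
  simp

lemma eq_of_card_eq_of_sortNth_eq {I J : Finset ℕ} (hcard : I.card = J.card)
    (h : ∀ s < I.card, sortNth I s = sortNth J s) : I = J := by
  have hsort : I.sort (· ≤ ·) = J.sort (· ≤ ·) :=
    List.ext_getElem (by simpa using hcard) fun s hI hJ => by
      rw [Finset.length_sort] at hI hJ
      rw [← sortNth_eq_getElem hI, ← sortNth_eq_getElem hJ, h s hI]
  rw [← I.sort_toFinset (· ≤ ·), hsort, J.sort_toFinset]

lemma strictMonoOn_glJoinAux {I J : Finset ℕ} (h : I.card ≤ J.card) :
    StrictMonoOn (fun s => max (sortNth I s) (sortNth J s)) (Set.Iio I.card) := by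
  intro s hs t ht hst
  have hJ := sortNth_strictMonoOn J (Set.mem_Iio.2 (lt_of_lt_of_le hs h))
    (Set.mem_Iio.2 (lt_of_lt_of_le ht h)) hst
  exact max_lt_max (sortNth_strictMonoOn I hs ht hst) hJ

lemma strictMonoOn_glMeetAux {I J : Finset ℕ} :
    StrictMonoOn
      (fun s => if s < I.card then min (sortNth I s) (sortNth J s) else sortNth J s)
      (Set.Iio J.card) := by
  intro s hs t ht hst
  have hJ := sortNth_strictMonoOn J hs ht hst
  by_cases ht' : t < I.card
  · have hI := sortNth_strictMonoOn I (Set.mem_Iio.2 (hst.trans ht')) ht' hst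
    simp only [if_pos (hst.trans ht'), if_pos ht']
    omega
  · simp only [if_neg ht']
    split_ifs <;> omega

lemma card_glJoin (I J : Finset ℕ) : (glJoin I J).card = min I.card J.card := by
  unfold glJoin glJoinAux
  split_ifs with h
  · rw [card_image_range (strictMonoOn_glJoinAux h), min_eq_left h]
  · rw [card_image_range (strictMonoOn_glJoinAux (by omega)), min_eq_right (by omega)]

lemma sortNth_glJoin (I J : Finset ℕ) {s : ℕ} (hs : s < min I.card J.card) :
    sortNth (glJoin I J) s = max (sortNth I s) (sortNth J s) := by
  unfold glJoin glJoinAux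
  split_ifs with h
  · exact sortNth_image_range (strictMonoOn_glJoinAux h) (by omega)
  · rw [sortNth_image_range (strictMonoOn_glJoinAux (by omega)) (by omega), max_comm]

lemma card_glMeet (I J : Finset ℕ) : (glMeet I J).card = max I.card J.card := by
  unfold glMeet glMeetAux
  split_ifs with h
  · rw [card_image_range strictMonoOn_glMeetAux, max_eq_right h]
  · rw [card_image_range strictMonoOn_glMeetAux, max_eq_left (by omega)]

lemma sortNth_glMeet (I J : Finset ℕ) {s : ℕ} (hs : s < max I.card J.card) :
    sortNth (glMeet I J) s =
      if s < I.card then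
        (if s < J.card then min (sortNth I s) (sortNth J s) else sortNth I s)
      else sortNth J s := by
  unfold glMeet glMeetAux
  by_cases h : I.card ≤ J.card
  · rw [if_pos h, sortNth_image_range strictMonoOn_glMeetAux (by omega)]
    split_ifs <;> omega
  · rw [if_neg h, sortNth_image_range strictMonoOn_glMeetAux (by omega)]
    split_ifs <;> omega

lemma glGe_glJoin_left (I J : Finset ℕ) : glGe (glJoin I J) I := by
  refine ⟨by rw [card_glJoin]; omega, fun s hs => ?_⟩
  rw [card_glJoin] at hs
  rw [sortNth_glJoin I J hs]
  exact le_max_left _ _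

lemma glGe_glJoin_right (I J : Finset ℕ) : glGe (glJoin I J) J := by
  refine ⟨by rw [card_glJoin]; omega, fun s hs => ?_⟩
  rw [card_glJoin] at hs
  rw [sortNth_glJoin I J hs]
  exact le_max_right _ _

lemma glGe_glJoin {U I J : Finset ℕ} (hI : glGe U I) (hJ : glGe U J) :
    glGe U (glJoin I J) := by
  refine ⟨by rw [card_glJoin]; exact le_min hI.1 hJ.1, fun s hs => ?_⟩
  rw [sortNth_glJoin I J (lt_min (hs.trans_le hI.1) (hs.trans_le hJ.1))]
  exact max_le (hI.2 s hs) (hJ.2 s hs)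

lemma glGe_glMeet_left (I J : Finset ℕ) : glGe I (glMeet I J) := by
  refine ⟨by rw [card_glMeet]; omega, fun s hs => ?_⟩
  rw [sortNth_glMeet I J (by omega), if_pos hs]
  split_ifs <;> omega

lemma glGe_glMeet_right (I J : Finset ℕ) : glGe J (glMeet I J) := by
  refine ⟨by rw [card_glMeet]; omega, fun s hs => ?_⟩
  rw [sortNth_glMeet I J (by omega)]
  split_ifs <;> omega

lemma glGe_glMeet {L I J : Finset ℕ} (hI : glGe I L) (hJ : glGe J L) :
    glGe (glMeet I J) L := by
  refine ⟨by rw [card_glMeet]; exact max_le hI.1 hJ.1, fun s hs => ?_⟩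
  rw [card_glMeet] at hs
  rw [sortNth_glMeet I J hs]
  split_ifs with hsI hsJ
  · exact le_min (hI.2 s hsI) (hJ.2 s hsJ)
  · exact hI.2 s hsI
  · exact hJ.2 s (by omega)

lemma glMeet_glJoin_distrib (I J K : Finset ℕ) :
    glMeet I (glJoin J K) = glJoin (glMeet I J) (glMeet I K) := by
  apply eq_of_card_eq_of_sortNth_eq (by simp only [card_glMeet, card_glJoin]; omega)
  intro s hs
  rw [card_glMeet, card_glJoin] at hs
  rw [sortNth_glMeet _ _ (by rwa [card_glJoin]), card_glJoin,
    sortNth_glJoin (glMeet I J) (glMeet I K) (by simp only [card_glMeet]; omega),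
    sortNth_glMeet I J (by omega), sortNth_glMeet I K (by omega)]
  by_cases hJK : s < min J.card K.card
  · rw [sortNth_glJoin J K hJK]
    split_ifs <;> omega
  · split_ifs <;> omega

lemma glJoin_glMeet_distrib (I J K : Finset ℕ) :
    glJoin I (glMeet J K) = glMeet (glJoin I J) (glJoin I K) := by
  apply eq_of_card_eq_of_sortNth_eq (by simp only [card_glMeet, card_glJoin]; omega)
  intro s hs
  rw [card_glJoin, card_glMeet] at hs
  rw [sortNth_glJoin _ _ (by rwa [card_glMeet]),
    sortNth_glMeet (glJoin I J) (glJoin I K) (by simp only [card_glJoin]; omega),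
    sortNth_glMeet J K (by omega), card_glJoin, card_glJoin]
  rcases lt_or_ge s J.card with hJ | hJ <;> rcases lt_or_ge s K.card with hK | hK
  · rw [sortNth_glJoin I J (by omega), sortNth_glJoin I K (by omega)]
    split_ifs <;> omega
  · rw [sortNth_glJoin I J (by omega)]
    split_ifs <;> omega
  · rw [sortNth_glJoin I K (by omega)]
    split_ifs <;> omega
  · omega

/-- The Gonciulea–Lakshmibai poset of subsets of {1,…,n} is a distributive
lattice, with meet and join given by the explicit coordinatewise min/max
formulas: glJoin is the least upper bound, glMeet is the greatest lower
bound, and both distributive laws hold. -/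
theorem stmt_6 (n : ℕ) :
    (∀ I J : Finset ℕ, I ⊆ Finset.Icc 1 n → J ⊆ Finset.Icc 1 n →
      glGe (glJoin I J) I ∧ glGe (glJoin I J) J ∧
      (∀ U : Finset ℕ, U ⊆ Finset.Icc 1 n → glGe U I → glGe U J →
        glGe U (glJoin I J))) ∧
    (∀ I J : Finset ℕ, I ⊆ Finset.Icc 1 n → J ⊆ Finset.Icc 1 n →
      glGe I (glMeet I J) ∧ glGe J (glMeet I J) ∧
      (∀ L : Finset ℕ, L ⊆ Finset.Icc 1 n → glGe I L → glGe J L →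
        glGe (glMeet I J) L)) ∧
    (∀ I J K : Finset ℕ, I ⊆ Finset.Icc 1 n → J ⊆ Finset.Icc 1 n →
      K ⊆ Finset.Icc 1 n →
      glMeet I (glJoin J K) = glJoin (glMeet I J) (glMeet I K) ∧
      glJoin I (glMeet J K) = glMeet (glJoin I J) (glJoin I K)) :=
  ⟨fun I J _ _ => ⟨glGe_glJoin_left I J, glGe_glJoin_right I J, fun _ _ => glGe_glJoin⟩,
    fun I J _ _ => ⟨glGe_glMeet_left I J, glGe_glMeet_right I J, fun _ _ => glGe_glMeet⟩,
    fun I J K _ _ _ => ⟨glMeet_glJoin_distrib I J K, glJoin_glMeet_distrib I J K⟩⟩
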